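/- arXiv:2203.04653 — 5 statements merged into one kernel-verified Lean document; each statement's English description precedes it below -/
import Mathlib

section
/- Let φ : ℝ² → ℂ be a Schwartz function and let ψ : ℝ² → ℂ be essentially bounded and measurable, and suppose that ∫_{ℝ²} g(x)·ψ(x) dx = ∫_{ℝ²} g(x)·φ(x) dx for every Schwartz function g with 𝓕g compactly supported in the open ball of radius 2 centered at the origin. Then for all Schwartz functions f, g whose Fourier transforms have compact support contained in 𝔻, one has |B_φ(f,g)| ≤ ‖ψ‖_{L∞} · ‖f‖_{L²} · ‖g‖_{L²}; in particular N(φ) ≤ ‖ψ‖_{L∞}. -/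
open MeasureTheory SchwartzMap Metric
open scoped FourierTransform Real ENNReal

noncomputable section

abbrev E2 : Type := EuclideanSpace ℝ (Fin 2)

/-- The open unit disc in `ℝ²`. -/
def disc : Set E2 := Metric.ball 0 1

/-- The Hankel form `B_φ(f,g) = ∫_𝔻 ∫_𝔻 𝓕f(ξ) 𝓕φ(ξ+η) conj(𝓕g(η)) dξ dη`. -/
def hankelForm (φ f g : 𝓢(E2, ℂ)) : ℂ :=
  ∫ η in disc, ∫ ξ in disc, 𝓕 ⇑f ξ * 𝓕 ⇑φ (ξ + η) * (starRingEnd ℂ) (𝓕 ⇑g η)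

/-- `𝓕f` has compact support contained in the open unit disc. -/
def PWcond (f : 𝓢(E2, ℂ)) : Prop :=
  HasCompactSupport (𝓕 ⇑f) ∧ tsupport (𝓕 ⇑f) ⊆ disc

/-- The Hankel (operator) norm `N(φ)`. -/
def hankelNorm (φ : 𝓢(E2, ℂ)) : ℝ :=
  sSup {x : ℝ | ∃ f g : 𝓢(E2, ℂ), PWcond f ∧ PWcond g ∧
    eLpNorm ⇑f 2 volume ≤ 1 ∧ eLpNorm ⇑g 2 volume ≤ 1 ∧ x = ‖hankelForm φ f g‖}

/-- `D_φ = {η ∈ 𝔻 : ∃ ξ ∈ 𝔻, ξ + η ∈ supp 𝓕φ}`. -/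
def Dset (φ : 𝓢(E2, ℂ)) : Set E2 :=
  {η | η ∈ disc ∧ ∃ ξ ∈ disc, ξ + η ∈ tsupport (𝓕 ⇑φ)}

/-! Writing `h x = f (-x) * conj (g x)`, the self-adjointness of `𝓕` and Plancherel turn the Hankel
form into `∫ h φ`. The Fourier transform of a product is the convolution of the Fourier
transforms, so `𝓕 h` is supported in `𝔻 + 𝔻 = ball 0 2`; hence `φ` may be replaced by `ψ`, and
Hölder's inequality gives `|∫ h ψ| ≤ ‖ψ‖_∞ ‖f‖₂ ‖g‖₂`. -/

open scoped Convolution Pointwise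

namespace SchwartzMap

section Reflect

variable {V F : Type*} [NormedAddCommGroup V] [NormedSpace ℝ V]
  [NormedAddCommGroup F] [NormedSpace ℝ F]

def reflect (f : 𝓢(V, F)) : 𝓢(V, F) :=
  compCLMOfContinuousLinearEquiv ℝ (ContinuousLinearEquiv.neg ℝ) f

@[simp] theorem reflect_apply (f : 𝓢(V, F)) (x : V) : reflect f x = f (-x) := rfl

def conj (f : 𝓢(V, ℂ)) : 𝓢(V, ℂ) := postcompCLM (Complex.conjCLE : ℂ →L[ℝ] ℂ) f

@[simp] theorem conj_apply (f : 𝓢(V, ℂ)) (x : V) : conj f x = starRingEnd ℂ (f x) := rfl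

end Reflect

variable {V F F₁ F₂ F₃ : Type*} [NormedAddCommGroup V] [InnerProductSpace ℝ V]
  [FiniteDimensional ℝ V] [MeasurableSpace V] [BorelSpace V]
  [NormedAddCommGroup F] [NormedSpace ℂ F]
  [NormedAddCommGroup F₁] [NormedSpace ℂ F₁] [CompleteSpace F₁]
  [NormedAddCommGroup F₂] [NormedSpace ℂ F₂] [CompleteSpace F₂]
  [NormedAddCommGroup F₃] [NormedSpace ℂ F₃]

theorem fourier_reflect_apply (f : 𝓢(V, F)) (ξ : V) : 𝓕 ⇑(reflect f) ξ = 𝓕 ⇑f (-ξ) :=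
  Real.fourier_comp_linearIsometry (LinearIsometryEquiv.neg ℝ) f ξ

theorem fourier_conj_apply (f : 𝓢(V, ℂ)) (ξ : V) :
    𝓕 ⇑(conj f) ξ = starRingEnd ℂ (𝓕 ⇑f (-ξ)) := by
  simp only [Real.fourier_eq, ← integral_conj, conj_apply, inner_neg_right, neg_neg,
    Circle.smul_def, smul_eq_mul, map_mul, ← Circle.coe_inv_eq_conj, ← AddChar.map_neg_eq_inv]

theorem fourier_fourier_apply [CompleteSpace F] (f : 𝓢(V, F)) (x : V) : 𝓕 (𝓕 f) x = f (-x) := by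
  rw [fourier_coe, ← neg_neg x, ← Real.fourierInv_eq_fourier_neg, neg_neg, ← fourierInv_coe,
    FourierTransform.fourierInv_fourier_eq]

theorem fourier_pairing (B : F₁ →L[ℂ] F₂ →L[ℂ] F₃) (f : 𝓢(V, F₁)) (g : 𝓢(V, F₂)) :
    𝓕 (pairing B f g) = convolution B (𝓕 f) (𝓕 g) := by
  ext ξ
  -- `convolution B a b` is `𝓕⁻ (pairing B (𝓕 a) (𝓕 b))`, and `𝓕 (𝓕 f)` is `f` reflected.
  change 𝓕 (pairing B f g) ξ = 𝓕⁻ (pairing B (𝓕 (𝓕 f)) (𝓕 (𝓕 g))) ξ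
  rw [fourierInv_coe, Real.fourierInv_eq_fourier_comp_neg, fourier_coe]
  refine congrFun (congrArg 𝓕 (funext fun x ↦ ?_)) ξ
  simp [fourier_fourier_apply]

theorem fourier_mul_eq_convolution (f g : 𝓢(V, ℂ)) :
    𝓕 (fun x ↦ f x * g x) = 𝓕 ⇑f ⋆[ContinuousLinearMap.mul ℂ ℂ] 𝓕 ⇑g := by
  ext ξ
  have := congr($(fourier_pairing (ContinuousLinearMap.mul ℂ ℂ) f g) ξ)
  rwa [convolution_apply, fourier_coe] at this

theorem tsupport_fourier_mul_subset {f g : 𝓢(V, ℂ)} (hf : HasCompactSupport (𝓕 ⇑f))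
    (hg : HasCompactSupport (𝓕 ⇑g)) :
    tsupport (𝓕 fun x ↦ f x * g x) ⊆ tsupport (𝓕 ⇑f) + tsupport (𝓕 ⇑g) := by
  rw [fourier_mul_eq_convolution]
  refine closure_minimal ((support_convolution_subset _).trans ?_)
    (hf.isCompact.add hg.isCompact).isClosed
  exact Set.add_subset_add (subset_tsupport _) (subset_tsupport _)

theorem integral_fourier_mul_fourier_add (f φ : 𝓢(V, ℂ)) (η : V) :
    ∫ ξ, 𝓕 ⇑f ξ * 𝓕 ⇑φ (ξ + η) = 𝓕 (fun x ↦ f (-x) * φ x) η := by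
  rw [show (fun x ↦ f (-x) * φ x) = fun x ↦ reflect f x * φ x from rfl,
    fourier_mul_eq_convolution, convolution_def, ← integral_neg_eq_self]
  simp [fourier_reflect_apply, sub_eq_add_neg, add_comm]

theorem integral_integral_fourier_mul_fourier_add_mul_conj (f g φ : 𝓢(V, ℂ)) :
    ∫ η, ∫ ξ, 𝓕 ⇑f ξ * 𝓕 ⇑φ (ξ + η) * starRingEnd ℂ (𝓕 ⇑g η) =
      ∫ x, f (-x) * starRingEnd ℂ (g x) * φ x := by
  calc _ = ∫ η, 𝓕 (fun x ↦ f (-x) * φ x) η * starRingEnd ℂ (𝓕 ⇑g η) := by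
        simp only [integral_mul_const, integral_fourier_mul_fourier_add]
    _ = ∫ x, f (-x) * φ x * starRingEnd ℂ (g x) := by
        simpa [RCLike.inner_apply, fourier_coe, pairing_apply, mul_comm] using
          integral_inner_fourier_fourier g (pairing (.mul ℂ ℂ) (reflect f) φ)
    _ = _ := by simp only [mul_right_comm]

end SchwartzMap

theorem MeasureTheory.norm_integral_mul_mul_le {α : Type*} [MeasurableSpace α] {μ : Measure α}
    {f g ψ : α → ℂ} (hf : MemLp f 2 μ) (hg : MemLp g 2 μ) (hψ : MemLp ψ ∞ μ) :
    ‖∫ x, f x * g x * ψ x ∂μ‖ ≤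
      (eLpNorm ψ ∞ μ).toReal * (eLpNorm f 2 μ).toReal * (eLpNorm g 2 μ).toReal := by
  have hmul : ∀ a b : ℂ, ‖a * b‖ ≤ (1 : NNReal) * ‖a‖ * ‖b‖ := fun a b ↦ by simp
  have hfg : eLpNorm (fun x ↦ f x * g x) 1 μ ≤ eLpNorm f 2 μ * eLpNorm g 2 μ := by
    simpa using eLpNorm_le_eLpNorm_mul_eLpNorm'_of_norm hf.1 hg.1 (· * ·) 1
      (.of_forall fun x ↦ hmul (f x) (g x))
  have hfgψ : eLpNorm (fun x ↦ f x * g x * ψ x) 1 μ ≤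
      eLpNorm f 2 μ * eLpNorm g 2 μ * eLpNorm ψ ∞ μ := by
    refine (eLpNorm_le_eLpNorm_mul_eLpNorm'_of_norm (p := 1) (q := ∞) (hf.1.mul hg.1) hψ.1
      (· * ·) 1 (.of_forall fun x ↦ hmul (f x * g x) (ψ x))).trans ?_
    rw [ENNReal.coe_one, one_mul]
    exact mul_le_mul_left hfg _
  have hfin : eLpNorm f 2 μ * eLpNorm g 2 μ * eLpNorm ψ ∞ μ ≠ ∞ := by
    finiteness [hf.2, hg.2, hψ.2]
  calc ‖∫ x, f x * g x * ψ x ∂μ‖ ≤ (eLpNorm (fun x ↦ f x * g x * ψ x) 1 μ).toReal := by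
        rw [← toReal_enorm, eLpNorm_one_eq_lintegral_enorm]
        refine ENNReal.toReal_mono ?_ (enorm_integral_le_lintegral_enorm _)
        rw [← eLpNorm_one_eq_lintegral_enorm]
        exact ne_top_of_le_ne_top hfin hfgψ
    _ ≤ (eLpNorm f 2 μ * eLpNorm g 2 μ * eLpNorm ψ ∞ μ).toReal := ENNReal.toReal_mono hfin hfgψ
    _ = _ := by simp only [ENNReal.toReal_mul]; ring

theorem preimage_neg_disc : Neg.neg ⁻¹' disc = disc := by
  ext; simp [disc]

theorem PWcond.reflect {f : 𝓢(E2, ℂ)} (hf : PWcond f) : PWcond f.reflect := by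
  have h : 𝓕 ⇑f.reflect = 𝓕 ⇑f ∘ Neg.neg := funext (fourier_reflect_apply f)
  refine ⟨h ▸ hf.1.comp_homeomorph (Homeomorph.neg E2), ?_⟩
  rw [h, ← preimage_neg_disc]
  exact (tsupport_comp_subset_preimage _ continuous_neg).trans (Set.preimage_mono hf.2)

theorem PWcond.conj {f : 𝓢(E2, ℂ)} (hf : PWcond f) : PWcond f.conj := by
  have h : 𝓕 ⇑f.conj = starRingEnd ℂ ∘ 𝓕 ⇑f.reflect := funext fun ξ ↦ by
    rw [fourier_conj_apply, Function.comp_apply, fourier_reflect_apply]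
  rw [PWcond, h]
  exact ⟨hf.reflect.1.comp_left (map_zero _),
    (tsupport_comp_subset (map_zero _) _).trans hf.reflect.2⟩

theorem PWcond.fourier_mul_supported_in_ball {f g : 𝓢(E2, ℂ)} (hf : PWcond f) (hg : PWcond g) :
    HasCompactSupport (𝓕 fun x ↦ f x * g x) ∧ tsupport (𝓕 fun x ↦ f x * g x) ⊆ ball 0 2 := by
  have hsub := tsupport_fourier_mul_subset hf.1 hg.1
  refine ⟨(hf.1.isCompact.add hg.1.isCompact).of_isClosed_subset (isClosed_tsupport _) hsub,
    hsub.trans ?_⟩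
  calc tsupport (𝓕 ⇑f) + tsupport (𝓕 ⇑g) ⊆ disc + disc := Set.add_subset_add hf.2 hg.2
    _ = ball 0 2 := by rw [disc, ball_add_ball one_pos one_pos, add_zero]; norm_num

theorem hankelForm_eq_integral (φ : 𝓢(E2, ℂ)) {f g : 𝓢(E2, ℂ)} (hf : tsupport (𝓕 ⇑f) ⊆ disc)
    (hg : tsupport (𝓕 ⇑g) ⊆ disc) :
    hankelForm φ f g = ∫ x, f (-x) * starRingEnd ℂ (g x) * φ x := by
  have hf0 : ∀ ξ ∉ disc, 𝓕 ⇑f ξ = 0 := fun ξ hξ ↦ image_eq_zero_of_notMem_tsupport (hξ <| hf ·)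
  have hg0 : ∀ η ∉ disc, 𝓕 ⇑g η = 0 := fun η hη ↦ image_eq_zero_of_notMem_tsupport (hη <| hg ·)
  rw [hankelForm, ← integral_integral_fourier_mul_fourier_add_mul_conj,
    setIntegral_eq_integral_of_forall_compl_eq_zero fun η hη ↦ by simp [hg0 η hη]]
  congr 1 with η
  exact setIntegral_eq_integral_of_forall_compl_eq_zero fun ξ hξ ↦ by simp [hf0 ξ hξ]

theorem norm_hankelForm_le {φ : 𝓢(E2, ℂ)} {ψ : E2 → ℂ} (hψ : MemLp ψ ⊤ volume)
    (hsymb : ∀ g : 𝓢(E2, ℂ), HasCompactSupport (𝓕 ⇑g) → tsupport (𝓕 ⇑g) ⊆ ball 0 2 →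
      ∫ x, g x * ψ x = ∫ x, g x * φ x)
    {f g : 𝓢(E2, ℂ)} (hf : PWcond f) (hg : PWcond g) :
    ‖hankelForm φ f g‖ ≤
      (eLpNorm ψ ⊤ volume).toReal * (eLpNorm ⇑f 2 volume).toReal *
        (eLpNorm ⇑g 2 volume).toReal := by
  obtain ⟨hcpt, hball⟩ := hf.reflect.fourier_mul_supported_in_ball hg.conj
  have hfr : eLpNorm ⇑f.reflect 2 volume = eLpNorm ⇑f 2 volume :=
    eLpNorm_comp_measurePreserving f.continuous.aestronglyMeasurable
      (Measure.measurePreserving_neg volume)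
  have hgc : eLpNorm ⇑g.conj 2 volume = eLpNorm ⇑g 2 volume :=
    eLpNorm_congr_norm_ae (.of_forall fun x ↦ RCLike.norm_conj _)
  calc ‖hankelForm φ f g‖ = ‖∫ x, f.reflect x * g.conj x * ψ x‖ := by
        rw [hankelForm_eq_integral φ hf.2 hg.2]
        exact congrArg _ (hsymb (pairing (.mul ℂ ℂ) f.reflect g.conj) hcpt hball).symm
    _ ≤ _ := norm_integral_mul_mul_le (f.reflect.memLp 2) (g.conj.memLp 2) hψ
    _ = _ := by rw [hfr, hgc]

theorem hankelNorm_le {φ : 𝓢(E2, ℂ)} {C : ℝ} (hC : 0 ≤ C)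
    (hB : ∀ f g : 𝓢(E2, ℂ), PWcond f → PWcond g →
      ‖hankelForm φ f g‖ ≤ C * (eLpNorm ⇑f 2 volume).toReal * (eLpNorm ⇑g 2 volume).toReal) :
    hankelNorm φ ≤ C := by
  refine Real.sSup_le ?_ hC
  rintro _ ⟨f, g, hf, hg, hf1, hg1, rfl⟩
  have hf1' : (eLpNorm ⇑f 2 volume).toReal ≤ 1 :=
    ENNReal.toReal_le_of_le_ofReal zero_le_one (by simpa using hf1)
  have hg1' : (eLpNorm ⇑g 2 volume).toReal ≤ 1 :=
    ENNReal.toReal_le_of_le_ofReal zero_le_one (by simpa using hg1)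
  calc ‖hankelForm φ f g‖ ≤ C * (eLpNorm ⇑f 2 volume).toReal * (eLpNorm ⇑g 2 volume).toReal :=
        hB f g hf hg
    _ ≤ C * 1 * 1 := by gcongr
    _ = C := by ring

theorem hankelForm_le_of_symbol (φ : 𝓢(E2, ℂ)) (ψ : E2 → ℂ)
    (hψ : MemLp ψ ⊤ volume)
    (hsymb : ∀ g : 𝓢(E2, ℂ), HasCompactSupport (𝓕 ⇑g) → tsupport (𝓕 ⇑g) ⊆ Metric.ball 0 2 →
      ∫ x, g x * ψ x = ∫ x, g x * φ x) :
    (∀ f g : 𝓢(E2, ℂ), PWcond f → PWcond g →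
      ‖hankelForm φ f g‖ ≤
        (eLpNorm ψ ⊤ volume).toReal * (eLpNorm ⇑f 2 volume).toReal *
          (eLpNorm ⇑g 2 volume).toReal) ∧
    hankelNorm φ ≤ (eLpNorm ψ ⊤ volume).toReal := by
  have hbound := fun f g (hf : PWcond f) (hg : PWcond g) ↦ norm_hankelForm_le hψ hsymb hf hg
  exact ⟨hbound, hankelNorm_le ENNReal.toReal_nonneg hbound⟩
end
end

section
/- Let n ≥ 2 be an integer, set r = min(1 − 1/√2, 1/n²), and for j = 1, …, n set θ_j = 2π(j−1)/n and e_j = (cos θ_j, sin θ_j) ∈ ℝ². Let S_j denote the closed ball of radius r centered at (2−r)e_j. Then for every pair 1 ≤ j ≠ k ≤ n, the sets E_j = {η ∈ 𝔻 : there exists ξ ∈ 𝔻 with ξ + η ∈ S_j} and E_k = {η ∈ 𝔻 : there exists ξ ∈ 𝔻 with ξ + η ∈ S_k} are disjoint. -/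
open Metric
open scoped Real

noncomputable section

/-!
If `η ∈ E_j`, then `η` lies within `1 + r` of the centre `(2 - r) e_j`, so `⟪η, e_j⟫ > 1 - 2r`.
A point `η` of the unit disc in `E_j ∩ E_k` would therefore give
`2 (1 - 2r) < ⟪η, e_j + e_k⟫ ≤ ‖e_j + e_k‖`. But distinct `e_j, e_k` make an angle of at
least `2π/n`, so `‖e_j + e_k‖² = 2 + 2 cos (θ_j - θ_k) ≤ 2 + 2 cos (2π/n) ≤ 4 (1 - 2/n²)²`,
and `r ≤ 1/n²` turns this into `‖e_j + e_k‖ ≤ 2 (1 - 2r)`.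
-/

open RealInnerProductSpace

section InnerProductSpace

variable {E : Type*} [NormedAddCommGroup E] [InnerProductSpace ℝ E]

lemma sub_sub_one_lt_inner_of_add_mem_closedBall {u ξ η : E} {c r : ℝ} (hu : ‖u‖ = 1)
    (hξ : ‖ξ‖ < 1) (h : ξ + η ∈ closedBall (c • u) r) : c - r - 1 < ⟪η, u⟫ := by
  rw [mem_closedBall, dist_comm, dist_eq_norm] at h
  have hcs : c - ⟪η, u⟫ ≤ ‖c • u - η‖ :=
    calc c - ⟪η, u⟫ = ⟪c • u - η, u⟫ := by
          rw [inner_sub_left, real_inner_smul_left, real_inner_self_eq_norm_sq, hu]; ring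
      _ ≤ ‖c • u - η‖ := by simpa [hu] using real_inner_le_norm (c • u - η) u
  have htri : ‖c • u - η‖ ≤ ‖c • u - (ξ + η)‖ + ‖ξ‖ :=
    calc ‖c • u - η‖ = ‖(c • u - (ξ + η)) + ξ‖ := by congr 1; abel
      _ ≤ _ := norm_add_le _ _
  linarith

lemma two_mul_lt_norm_add_of_lt_inner {u v η : E} {a : ℝ} (hη : ‖η‖ ≤ 1)
    (hu : a < ⟪η, u⟫) (hv : a < ⟪η, v⟫) : 2 * a < ‖u + v‖ :=
  calc 2 * a < ⟪η, u + v⟫ := by rw [inner_add_right]; linarith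
    _ ≤ ‖η‖ * ‖u + v‖ := real_inner_le_norm η (u + v)
    _ ≤ ‖u + v‖ := mul_le_of_le_one_left (norm_nonneg _) hη

end InnerProductSpace

namespace Real

lemma cos_le_cos_of_le_of_le_two_pi_sub {a x : ℝ} (ha : 0 ≤ a) (hax : a ≤ x)
    (hxa : x ≤ 2 * π - a) : cos x ≤ cos a := by
  rcases le_or_gt x π with hxπ | hπx
  · exact cos_le_cos_of_nonneg_of_le_pi ha hxπ hax
  · rw [← cos_two_pi_sub x]
    exact cos_le_cos_of_nonneg_of_le_pi ha (by linarith) (by linarith)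

lemma cos_two_pi_div_le {x : ℝ} (hx : 2 ≤ x) : cos (2 * π / x) ≤ 1 - 8 / x ^ 2 := by
  have hx0 : 0 < x := by linarith
  have hle : |2 * π / x| ≤ π := by
    rw [abs_of_pos (by positivity), div_le_iff₀ hx0]
    nlinarith [pi_pos]
  calc cos (2 * π / x) ≤ 1 - 2 / π ^ 2 * (2 * π / x) ^ 2 := cos_le_one_sub_mul_cos_sq hle
    _ = 1 - 8 / x ^ 2 := by field_simp; ring

lemma cos_two_pi_mul_div_sub_le {n : ℕ} {j k : Fin n} (hjk : j ≠ k) :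
    cos (2 * π * j / n - 2 * π * k / n) ≤ cos (2 * π / n) := by
  have hjk' : (j : ℕ) ≠ k := Fin.val_ne_of_ne hjk
  have hn : (0 : ℝ) < n := by exact_mod_cast j.pos
  have hd : (1 : ℝ) ≤ |(j : ℝ) - k| ∧ |(j : ℝ) - k| ≤ n - 1 := by
    have hjn : (j : ℝ) + 1 ≤ n := by exact_mod_cast j.isLt
    have hkn : (k : ℝ) + 1 ≤ n := by exact_mod_cast k.isLt
    have hj0 : (0 : ℝ) ≤ j := Nat.cast_nonneg _
    have hk0 : (0 : ℝ) ≤ k := Nat.cast_nonneg _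
    rcases lt_or_gt_of_ne hjk' with h | h
    · have h' : (j : ℝ) + 1 ≤ k := by exact_mod_cast h
      rw [abs_of_neg (by linarith)]
      constructor <;> linarith
    · have h' : (k : ℝ) + 1 ≤ j := by exact_mod_cast h
      rw [abs_of_pos (by linarith)]
      constructor <;> linarith
  have habs : |2 * π * j / n - 2 * π * k / n| = 2 * π * |(j : ℝ) - k| / n := by
    rw [← sub_div, ← mul_sub, abs_div, abs_mul, abs_of_pos two_pi_pos, abs_of_pos hn]
  rw [← cos_abs, habs]
  apply cos_le_cos_of_le_of_le_two_pi_sub (by positivity)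
  · exact div_le_div_of_nonneg_right (le_mul_of_one_le_right two_pi_pos.le hd.1) hn.le
  · rw [div_le_iff₀ hn, sub_mul, div_mul_cancel₀ _ hn.ne']
    nlinarith [pi_pos]

end Real

def unitVec (θ : ℝ) : E2 := (WithLp.equiv 2 (Fin 2 → ℝ)).symm ![Real.cos θ, Real.sin θ]

lemma inner_unitVec (a b : ℝ) : ⟪unitVec a, unitVec b⟫ = Real.cos (a - b) := by
  simp [unitVec, PiLp.inner_apply, Fin.sum_univ_two, Real.cos_sub, mul_comm]

lemma norm_unitVec (a : ℝ) : ‖unitVec a‖ = 1 := by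
  have h := inner_unitVec a a
  rwa [sub_self, Real.cos_zero, real_inner_self_eq_norm_sq,
    pow_eq_one_iff_of_nonneg (norm_nonneg _) two_ne_zero] at h

lemma norm_unitVec_add_sq (a b : ℝ) :
    ‖unitVec a + unitVec b‖ ^ 2 = 2 + 2 * Real.cos (a - b) := by
  rw [norm_add_sq_real, norm_unitVec, norm_unitVec, inner_unitVec]; ring

lemma norm_unitVec_add_le {n : ℕ} (hn : 2 ≤ n) {j k : Fin n} (hjk : j ≠ k) :
    ‖unitVec (2 * π * j / n) + unitVec (2 * π * k / n)‖ ≤ 2 * (1 - 2 / (n : ℝ) ^ 2) := by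
  have hn' : (2 : ℝ) ≤ n := by exact_mod_cast hn
  have hbound : 0 ≤ 2 * (1 - 2 / (n : ℝ) ^ 2) := by
    have : 2 / (n : ℝ) ^ 2 ≤ 1 := by rw [div_le_one (by positivity)]; nlinarith
    linarith
  rw [← pow_le_pow_iff_left₀ (norm_nonneg _) hbound two_ne_zero, norm_unitVec_add_sq]
  have hcos := (Real.cos_two_pi_mul_div_sub_le hjk).trans (Real.cos_two_pi_div_le hn')
  calc 2 + 2 * Real.cos (2 * π * j / n - 2 * π * k / n)
      ≤ 2 + 2 * (1 - 8 / (n : ℝ) ^ 2) := by linarith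
    _ ≤ 2 + 2 * (1 - 8 / (n : ℝ) ^ 2) + (4 / (n : ℝ) ^ 2) ^ 2 :=
        le_add_of_nonneg_right (sq_nonneg _)
    _ = (2 * (1 - 2 / (n : ℝ) ^ 2)) ^ 2 := by ring

theorem Dsets_disjoint (n : ℕ) (hn : 2 ≤ n) (r : ℝ)
    (hr : r = min (1 - 1 / Real.sqrt 2) (1 / (n : ℝ) ^ 2))
    (θ : Fin n → ℝ) (hθ : ∀ j, θ j = 2 * π * (j : ℝ) / n)
    (e : Fin n → E2)
    (he : ∀ j, e j = (WithLp.equiv 2 (Fin 2 → ℝ)).symm ![Real.cos (θ j), Real.sin (θ j)])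
    (S : Fin n → Set E2) (hS : ∀ j, S j = Metric.closedBall ((2 - r) • e j) r)
    (Eset : Fin n → Set E2)
    (hE : ∀ j, Eset j = {η | η ∈ disc ∧ ∃ ξ ∈ disc, ξ + η ∈ S j}) :
    ∀ j k, j ≠ k → Disjoint (Eset j) (Eset k) := by
  intro j k hjk
  have he' : ∀ i, e i = unitVec (2 * π * i / n) := fun i => by rw [he, hθ]; rfl
  have hinner : ∀ i, ∀ η ∈ Eset i, 1 - 2 * r < ⟪η, unitVec (2 * π * i / n)⟫ := by
    intro i η hη
    rw [hE, hS, he'] at hη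
    obtain ⟨-, ξ, hξ, hξη⟩ := hη
    have := sub_sub_one_lt_inner_of_add_mem_closedBall (norm_unitVec _)
      (mem_ball_zero_iff.mp hξ) hξη
    linarith
  rw [Set.disjoint_left]
  intro η hηj hηk
  have hη : ‖η‖ ≤ 1 := by
    rw [hE] at hηj
    exact (mem_ball_zero_iff.mp hηj.1).le
  have hlower := two_mul_lt_norm_add_of_lt_inner hη (hinner j η hηj) (hinner k η hηk)
  have hupper := norm_unitVec_add_le hn hjk
  have hrn : r ≤ 1 / (n : ℝ) ^ 2 := hr ▸ min_le_right _ _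
  rw [div_eq_mul_one_div 2] at hupper
  linarith
end
end

section
/- Let w, ξ ∈ ℂ with √2 ≤ |w|, |ξ| < 1, and |w − ξ| < 1. Then ξ ≠ 0 and |arg(ξ · conj(w))| ≤ arccos(|w|/2), where arg denotes the principal argument. -/
open scoped Real

/-
Write `z = ξ * conj w`. Expanding `‖w - ξ‖² < 1` gives `2 Re z > ‖w‖² + ‖ξ‖² - 1`, and for
`‖ξ‖ < 1 ≤ ‖w‖² - 1` the right-hand side is at least `‖ξ‖ ‖w‖²`, since the difference factors as
`(1 - ‖ξ‖)(‖w‖² - 1 - ‖ξ‖)`. Hence `cos (arg z) = Re z / ‖z‖ ≥ ‖w‖ / 2`, and `arccos` is antitone.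
-/

namespace Complex

open ComplexConjugate

theorem abs_arg_le_arccos_of_mul_norm_le_re {z : ℂ} {c : ℝ} (h : c * ‖z‖ ≤ z.re) :
    |z.arg| ≤ Real.arccos c := by
  rcases eq_or_ne z 0 with rfl | hz
  · simpa using Real.arccos_nonneg c
  have hc : c ≤ Real.cos |z.arg| := by
    rw [Real.cos_abs, cos_arg hz, le_div_iff₀ (norm_pos_iff.mpr hz)]
    exact h
  calc |z.arg| = Real.arccos (Real.cos |z.arg|) :=
        (Real.arccos_cos (abs_nonneg _) (abs_arg_le_pi z)).symm
    _ ≤ Real.arccos c := Real.arccos_le_arccos hc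

theorem two_mul_re_mul_conj (ξ w : ℂ) :
    2 * (ξ * conj w).re = ‖w‖ ^ 2 + ‖ξ‖ ^ 2 - ‖w - ξ‖ ^ 2 := by
  have h := normSq_sub ξ w
  simp only [← Complex.sq_norm, norm_sub_rev ξ w] at h
  linarith

end Complex

theorem mul_sq_le_sq_add_sq_sub_one {a b : ℝ} (hb : b < 1) (ha : 1 + b ≤ a ^ 2) :
    b * a ^ 2 ≤ a ^ 2 + b ^ 2 - 1 := by
  nlinarith [mul_nonneg (sub_nonneg.mpr hb.le) (sub_nonneg.mpr ha)]

theorem sector_containment (w ξ : ℂ) (hw : Real.sqrt 2 ≤ ‖w‖)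
    (hξ : ‖ξ‖ < 1) (hwξ : ‖w - ξ‖ < 1) :
    ξ ≠ 0 ∧ |Complex.arg (ξ * (starRingEnd ℂ) w)| ≤ Real.arccos (‖w‖ / 2) := by
  have hw2 : 2 ≤ ‖w‖ ^ 2 := by
    simpa using pow_le_pow_left₀ (Real.sqrt_nonneg 2) hw 2
  refine ⟨?_, Complex.abs_arg_le_arccos_of_mul_norm_le_re ?_⟩
  · rintro rfl
    rw [sub_zero] at hwξ
    nlinarith [norm_nonneg w]
  have hre := Complex.two_mul_re_mul_conj ξ w
  have hsq := mul_sq_le_sq_add_sq_sub_one hξ (by linarith : 1 + ‖ξ‖ ≤ ‖w‖ ^ 2)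
  have hwξ2 : ‖w - ξ‖ ^ 2 < 1 := pow_lt_one₀ (norm_nonneg _) hwξ two_ne_zero
  rw [norm_mul, Complex.norm_conj]
  linarith
end

section
/- For every real r with 0 ≤ r ≤ 1/2, one has arccos(1−r) + arcsin(r/(2−r)) ≤ 2√r + r ≤ 3√r. -/
open scoped Real

namespace Real

/-- Via `cos (2x) = 1 - 2 sin² x` and `sin x ≥ x - x³/6`, since `2 (1 - x²/6)² ≥ 1` on `[0, 1]`. -/
lemma cos_two_mul_le_one_sub_sq {x : ℝ} (hx0 : 0 ≤ x) (hx1 : x ≤ 1) :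
    cos (2 * x) ≤ 1 - x ^ 2 := by
  have hcubic : 0 ≤ x - x ^ 3 / 6 := by nlinarith [pow_le_one₀ hx0 hx1 (n := 2)]
  have hsin_sq : (x - x ^ 3 / 6) ^ 2 ≤ sin x ^ 2 := pow_le_pow_left₀ hcubic (sin_ge_sub_cube hx0) 2
  have hx2 : x ^ 2 ≤ 1 := pow_le_one₀ hx0 hx1
  rw [cos_two_mul, cos_sq']
  nlinarith [sq_nonneg x, mul_nonneg (sq_nonneg x) (sub_nonneg.2 hx2)]

lemma arccos_one_sub_sq_le {x : ℝ} (hx0 : 0 ≤ x) (hx1 : x ≤ 1) :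
    arccos (1 - x ^ 2) ≤ 2 * x :=
  calc arccos (1 - x ^ 2) ≤ arccos (cos (2 * x)) :=
        arccos_le_arccos (cos_two_mul_le_one_sub_sq hx0 hx1)
    _ = 2 * x := arccos_cos (by positivity) (by linarith [pi_gt_three])

lemma arcsin_div_two_sub_le {r : ℝ} (hr0 : 0 ≤ r) (hr : r ≤ 1 / 2) :
    arcsin (r / (2 - r)) ≤ r := by
  rw [arcsin_le_iff_le_sin' ⟨by linarith [pi_pos], by linarith [pi_gt_three]⟩]
  refine le_trans ?_ (sin_ge_sub_cube hr0)
  rw [div_le_iff₀ (by linarith)]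
  nlinarith [mul_nonneg hr0 hr0, mul_nonneg (mul_nonneg hr0 hr0) hr0]

end Real

theorem arccos_add_arcsin_bound (r : ℝ) (hr0 : 0 ≤ r) (hr : r ≤ 1 / 2) :
    Real.arccos (1 - r) + Real.arcsin (r / (2 - r)) ≤ 2 * Real.sqrt r + r ∧
      2 * Real.sqrt r + r ≤ 3 * Real.sqrt r := by
  have hr1 : r ≤ 1 := by linarith
  have harccos : Real.arccos (1 - r) ≤ 2 * Real.sqrt r := by
    simpa [Real.sq_sqrt hr0] using
      Real.arccos_one_sub_sq_le (Real.sqrt_nonneg r) (Real.sqrt_le_one.mpr hr1)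
  have harcsin := Real.arcsin_div_two_sub_le hr0 hr
  have hr_le_sqrt : r ≤ Real.sqrt r := Real.le_sqrt_self_iff.mpr hr1
  exact ⟨by linarith, by linarith⟩
end

section
/- Let 0 < r ≤ 1 − 1/√2 and θ ∈ ℝ. Suppose w ∈ ℂ satisfies |w − (2−r)e^{iθ}| ≤ r, and ξ ∈ ℂ satisfies |ξ| < 1 and |w − ξ| < 1. Then ξ ≠ 0 and |arg(ξ · e^{−iθ})| ≤ 3√r, where arg denotes the principal argument. -/
/-!
Rotating by `e^{-iθ}` moves the small disc to the real axis, centred at `2 - r`. A point `ζ` of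
the unit disc within distance `1` of a point `u` of that disc then satisfies
`2 Re (u ζ̄) > |u|² + |ζ|² - 1`, and `|u| ≥ 2 - 2r`; for `r ≤ 1 - 1/√2` this forces
`Re ζ > (1 - 2r) |ζ|`, i.e. `ζ` lies in the sector `cos (arg ζ) > 1 - 2r`.
Finally `1 - 2r ≥ cos (3√r)`, from `sin x ≥ x - x³/6` applied to `3√r / 2`.
-/

open scoped Real
open Complex ComplexConjugate

theorem mul_norm_lt_re_of_mem_lens {r : ℝ} (hr : r ≤ 1 - 1 / √2) {ζ u : ℂ}
    (hu : ‖u - (2 - r : ℝ)‖ ≤ r) (hζ : ‖ζ‖ < 1) (huζ : ‖u - ζ‖ < 1) :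
    (1 - 2 * r) * ‖ζ‖ < ζ.re := by
  have hsqrt2 : 1 / 2 ≤ (1 / √2) ^ 2 := by
    rw [div_pow, Real.sq_sqrt zero_le_two]; norm_num
  have hr_sq : 1 / 2 ≤ (1 - r) ^ 2 :=
    hsqrt2.trans (pow_le_pow_left₀ (by positivity) (by linarith) 2)
  have hr1 : r ≤ 1 := hr.trans (by linarith [show 0 ≤ 1 / √2 by positivity])
  have hu_norm : 2 - 2 * r ≤ ‖u‖ := by
    have := norm_sub_norm_le ((2 - r : ℝ) : ℂ) u
    rw [norm_sub_rev, Complex.norm_real, Real.norm_of_nonneg (by linarith)] at this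
    linarith
  have hre : (u * conj ζ).re ≤ r * ‖ζ‖ + (2 - r) * ζ.re := by
    have hsplit : u * conj ζ = (u - (2 - r : ℝ)) * conj ζ + (2 - r : ℝ) * conj ζ := by ring
    have hbound : ((u - (2 - r : ℝ)) * conj ζ).re ≤ r * ‖ζ‖ := by
      refine (re_le_norm _).trans ?_
      rw [norm_mul, norm_conj]
      exact mul_le_mul_of_nonneg_right hu (norm_nonneg ζ)
    rw [hsplit, add_re, re_ofReal_mul, conj_re]
    linarith
  have hlens : ‖u‖ ^ 2 + ‖ζ‖ ^ 2 - 1 < 2 * (u * conj ζ).re := by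
    have hexpand := normSq_sub u ζ
    rw [normSq_eq_norm_sq, normSq_eq_norm_sq, normSq_eq_norm_sq] at hexpand
    nlinarith [norm_nonneg (u - ζ)]
  -- `4(1-r)² + ρ² - 1 - 2rρ = 2(2-r)(1-2r)ρ + (1-ρ)(4(1-r)² - 1 - ρ)` with `ρ = ‖ζ‖`
  have hgap : 0 ≤ (1 - ‖ζ‖) * (4 * (1 - r) ^ 2 - 1 - ‖ζ‖) :=
    mul_nonneg (by linarith) (by linarith)
  nlinarith [mul_le_mul hu_norm hu_norm (by linarith) (norm_nonneg u)]

theorem cos_three_mul_sqrt_le {r : ℝ} (hr0 : 0 ≤ r) (hr : r ≤ 8 / 9) :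
    Real.cos (3 * √r) ≤ 1 - 2 * r := by
  set s := √r
  have hs0 : 0 ≤ s := Real.sqrt_nonneg r
  have hs_sq : s ^ 2 = r := Real.sq_sqrt hr0
  have hsin := Real.sin_ge_sub_cube (x := 3 * s / 2) (by positivity)
  have hcube : 3 * s / 2 - (3 * s / 2) ^ 3 / 6 = 3 * s / 2 * (1 - 3 * r / 8) := by
    rw [← hs_sq]; ring
  have hfactor : 2 / 3 ≤ 1 - 3 * r / 8 := by linarith
  have hsin_lb : s ≤ Real.sin (3 * s / 2) := by nlinarith
  have hcos : Real.cos (3 * s) = 1 - 2 * Real.sin (3 * s / 2) ^ 2 := by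
    rw [Real.sin_sq_eq_half_sub]; ring_nf
  rw [hcos, ← hs_sq]
  nlinarith [pow_le_pow_left₀ hs0 hsin_lb 2]

theorem abs_arg_lt_of_cos_mul_norm_lt_re {z : ℂ} {t : ℝ} (ht0 : 0 ≤ t)
    (h : Real.cos t * ‖z‖ < z.re) : |arg z| < t := by
  have hz : z ≠ 0 := by rintro rfl; simp at h
  by_contra! hle
  have hcos := Real.cos_le_cos_of_nonneg_of_le_pi ht0 (abs_arg_le_pi z) hle
  rw [Real.cos_abs, cos_arg hz, div_le_iff₀ (norm_pos_iff.2 hz)] at hcos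
  linarith

theorem sector_of_small_disc_general (r θ : ℝ) (hr : r ≤ 1 - 1 / Real.sqrt 2)
    (w ξ : ℂ) (hw : ‖w - (2 - r) * Complex.exp (θ * Complex.I)‖ ≤ r)
    (hξ : ‖ξ‖ < 1) (hwξ : ‖w - ξ‖ < 1) :
    ξ ≠ 0 ∧ |Complex.arg (ξ * Complex.exp (-θ * Complex.I))| ≤ 3 * Real.sqrt r := by
  have hr0 : 0 ≤ r := (norm_nonneg _).trans hw
  have hr_half : r ≤ 1 / 2 := by
    have : 1 / 2 ≤ 1 / √2 := one_div_le_one_div_of_le (by positivity)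
      (Real.sqrt_le_iff.2 ⟨zero_le_two, by norm_num⟩)
    linarith
  set e := exp (-θ * I)
  have he : ‖e‖ = 1 := by simpa [e, neg_mul] using norm_exp_ofReal_mul_I (-θ)
  have hrot : w * e - (2 - r : ℝ) = (w - (2 - r) * exp (θ * I)) * e := by
    rw [sub_mul, mul_assoc, ← Complex.exp_add, neg_mul, add_neg_cancel, Complex.exp_zero]
    push_cast; ring
  have hsector : (1 - 2 * r) * ‖ξ * e‖ < (ξ * e).re :=
    mul_norm_lt_re_of_mem_lens hr (u := w * e) (by rwa [hrot, norm_mul, he, mul_one])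
      (by rwa [norm_mul, he, mul_one]) (by rwa [← sub_mul, norm_mul, he, mul_one])
  have hcos := cos_three_mul_sqrt_le hr0 (by linarith)
  refine ⟨?_, (abs_arg_lt_of_cos_mul_norm_lt_re (by positivity)
    ((mul_le_mul_of_nonneg_right hcos (norm_nonneg _)).trans_lt hsector)).le⟩
  rintro rfl
  simp at hsector

theorem sector_of_small_disc (r θ : ℝ) (hr0 : 0 < r) (hr : r ≤ 1 - 1 / Real.sqrt 2)
    (w ξ : ℂ) (hw : ‖w - (2 - r) * Complex.exp (θ * Complex.I)‖ ≤ r)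
    (hξ : ‖ξ‖ < 1) (hwξ : ‖w - ξ‖ < 1) :
    ξ ≠ 0 ∧ |Complex.arg (ξ * Complex.exp (-θ * Complex.I))| ≤ 3 * Real.sqrt r :=
  sector_of_small_disc_general r θ hr w ξ hw hξ hwξ
end
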